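/- In the block graph of the design 𝓑 = {B_i^e : 1 ≤ i ≤ 11, e ∈ ZMod 13}, every clique has size at most 13; that is, every subfamily of 𝓑 whose members pairwise have nonempty intersection contains at most 13 blocks. -/
import Mathlib


/-- The point set `P = (ZMod 13) × {0,1,2,a,b} ∪ {∞}`, encoded with labels
`0,1,2,a,b` as `(0 : Fin 5), 1, 2, 3, 4` respectively and `∞` as `none`. -/
abbrev Pt : Type := Option (ZMod 13 × Fin 5)

/-- The point `n_x` (a non-infinity point). -/
def pt (n : ZMod 13) (x : Fin 5) : Pt := some (n, x)

/-- The point `∞`. -/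
def infty : Pt := none

/-- Development by `e` : add `e` (mod 13) to the `ZMod 13` coordinate of every
non-`∞` point, fixing `∞`. -/
def dev (e : ZMod 13) : Pt → Pt
  | none => none
  | some (n, x) => some (n + e, x)

/-- The eleven basic blocks `B1, …, B11` (labels: `a = 3`, `b = 4`). -/
def basicBlock : Fin 11 → Finset Pt :=
  ![{pt 2 0, pt 5 0, pt 4 1, pt 9 1, pt 0 3, pt 6 3},
    {pt 1 0, pt 2 0, pt 6 0, pt 12 2, pt 5 4, pt 8 4},
    {pt 6 1, pt 2 1, pt 12 2, pt 1 2, pt 0 3, pt 5 3},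
    {pt 3 1, pt 6 1, pt 5 1, pt 10 0, pt 2 4, pt 11 4},
    {pt 5 2, pt 6 2, pt 10 0, pt 3 0, pt 0 3, pt 2 3},
    {pt 9 2, pt 5 2, pt 2 2, pt 4 1, pt 6 4, pt 7 4},
    {pt 7 0, pt 9 0, pt 10 1, pt 1 2, pt 3 3, pt 4 4},
    {pt 2 3, pt 6 3, pt 5 3, pt 4 4, pt 12 4, pt 10 4},
    {pt 8 1, pt 1 1, pt 4 2, pt 3 0, pt 9 3, pt 12 4},
    {pt 11 2, pt 3 2, pt 12 0, pt 9 1, pt 1 3, pt 10 4},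
    {infty, pt 0 0, pt 0 1, pt 0 2, pt 0 3, pt 0 4}]

/-- The family `𝓑 = {Bᵢ^e : 1 ≤ i ≤ 11, e ∈ ZMod 13}` of developed blocks. -/
def designBlocks : Finset (Finset Pt) :=
  (Finset.univ : Finset (Fin 11 × ZMod 13)).image
    fun p => (basicBlock p.1).image (dev p.2)


/-! ### Auxiliary development -/

open Finset

def blk (q : Fin 11 × ZMod 13) : Finset Pt := (basicBlock q.1).image (dev q.2)

lemma designBlocks_eq : designBlocks = (Finset.univ : Finset (Fin 11 × ZMod 13)).image blk := rfl

lemma dev_dev (e e' : ZMod 13) (p : Pt) : dev e (dev e' p) = dev (e' + e) p := by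
  cases p with
  | none => rfl
  | some q => simp [dev, add_assoc]

lemma dev_zero (p : Pt) : dev 0 p = p := by
  cases p with
  | none => rfl
  | some q => simp [dev]

lemma dev_inj (e : ZMod 13) : Function.Injective (dev e) := by
  intro p q h
  have h2 := congrArg (dev (-e)) h
  rwa [dev_dev, dev_dev, add_neg_cancel, dev_zero, dev_zero] at h2

set_option maxRecDepth 100000 in
set_option maxHeartbeats 2000000 in
lemma factA : ∀ i₁ i₂ : Fin 11, ∀ e : ZMod 13,
    ((basicBlock i₁) ∩ (basicBlock i₂).image (dev e)).card ≤ 1 ∨ (i₁ = i₂ ∧ e = 0) := by decide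

set_option maxRecDepth 100000 in
set_option maxHeartbeats 2000000 in
lemma factB : ∀ p : Pt,
    ((Finset.univ : Finset (Fin 11 × ZMod 13)).filter (fun q => p ∈ blk q)).card = 13 := by
  decide

lemma basic_card : ∀ i : Fin 11, (basicBlock i).card = 6 := by decide

lemma blk_card (q : Fin 11 × ZMod 13) : (blk q).card = 6 := by
  rw [blk, Finset.card_image_of_injective _ (dev_inj _), basic_card]

lemma blk_trans (i : Fin 11) (e₁ e₂ : ZMod 13) :
    blk (i, e₂) = ((basicBlock i).image (dev (e₂ - e₁))).image (dev e₁) := by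
  rw [blk, Finset.image_image]
  congr 1
  funext p
  rw [Function.comp_apply, dev_dev, sub_add_cancel]

lemma interA (i₁ i₂ : Fin 11) (e₁ e₂ : ZMod 13) :
    (blk (i₁, e₁) ∩ blk (i₂, e₂)).card ≤ 1 ∨ (i₁ = i₂ ∧ e₁ = e₂) := by
  have h1 : blk (i₁, e₁) = (basicBlock i₁).image (dev e₁) := rfl
  have h2 := blk_trans i₂ e₁ e₂
  rw [h1, h2, ← Finset.image_inter _ _ (dev_inj e₁),
    Finset.card_image_of_injective _ (dev_inj e₁)]
  rcases factA i₁ i₂ (e₂ - e₁) with h | ⟨hi, he⟩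
  · exact Or.inl h
  · exact Or.inr ⟨hi, by have : e₂ - e₁ = 0 := he; linear_combination -this⟩

lemma blk_inj : Function.Injective blk := by
  rintro ⟨i₁, e₁⟩ ⟨i₂, e₂⟩ h
  rcases interA i₁ i₂ e₁ e₂ with hle | ⟨hi, he⟩
  · rw [h, Finset.inter_self, blk_card] at hle; omega
  · rw [hi, he]

lemma D_card6 : ∀ B ∈ designBlocks, B.card = 6 := by
  intro B hB
  rw [designBlocks_eq, Finset.mem_image] at hB
  obtain ⟨q, -, rfl⟩ := hB
  exact blk_card q

lemma D_inter : ∀ B₁ ∈ designBlocks, ∀ B₂ ∈ designBlocks, B₁ ≠ B₂ → (B₁ ∩ B₂).card ≤ 1 := by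
  intro B₁ h₁ B₂ h₂ hne
  rw [designBlocks_eq, Finset.mem_image] at h₁ h₂
  obtain ⟨⟨i₁, e₁⟩, -, rfl⟩ := h₁
  obtain ⟨⟨i₂, e₂⟩, -, rfl⟩ := h₂
  rcases interA i₁ i₂ e₁ e₂ with h | ⟨hi, he⟩
  · exact h
  · exact absurd (by rw [hi, he]) hne

lemma D_r (p : Pt) : (designBlocks.filter (fun B => p ∈ B)).card = 13 := by
  rw [designBlocks_eq, Finset.filter_image, Finset.card_image_of_injective _ blk_inj]
  exact factB p

lemma D_card : designBlocks.card ≤ 143 := by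
  refine le_trans Finset.card_image_le ?_
  simp [Finset.card_univ]

lemma D_two (p q : Pt) (hpq : p ≠ q) :
    (designBlocks.filter (fun B => p ∈ B ∧ q ∈ B)).card ≤ 1 := by
  by_contra h
  push_neg at h
  obtain ⟨B₁, hB₁, B₂, hB₂, hne⟩ := Finset.one_lt_card.1 h
  rw [Finset.mem_filter] at hB₁ hB₂
  have hsub : ({p, q} : Finset Pt) ⊆ B₁ ∩ B₂ := by
    intro x hx
    rw [Finset.mem_insert, Finset.mem_singleton] at hx
    rcases hx with rfl | rfl
    · exact Finset.mem_inter.2 ⟨hB₁.2.1, hB₂.2.1⟩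
    · exact Finset.mem_inter.2 ⟨hB₁.2.2, hB₂.2.2⟩
  have h2 : 2 ≤ (B₁ ∩ B₂).card := by
    rw [← Finset.card_pair hpq]; exact Finset.card_le_card hsub
  have := D_inter B₁ hB₁.1 B₂ hB₂.1 hne
  omega

set_option maxHeartbeats 1000000 in
/-- In the block graph of the design `𝓑 = {Bᵢ^e}`, every clique has size at most 13:
every subfamily of `𝓑` whose members pairwise (when distinct) have nonempty
intersection contains at most 13 blocks. -/
theorem statement_11 :
    ∀ C : Finset (Finset Pt), C ⊆ designBlocks →
      (∀ B₁ ∈ C, ∀ B₂ ∈ C, B₁ ≠ B₂ → (B₁ ∩ B₂).Nonempty) →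
      C.card ≤ 13 := by
  intro C hC hint
  by_contra hlt
  push_neg at hlt
  obtain ⟨C', hC'sub, hC'card⟩ := Finset.exists_subset_card_eq (show 14 ≤ C.card by omega)
  have hC'D : C' ⊆ designBlocks := hC'sub.trans hC
  have hint' : ∀ B₁ ∈ C', ∀ B₂ ∈ C', B₁ ≠ B₂ → (B₁ ∩ B₂).card = 1 := by
    intro B₁ h₁ B₂ h₂ hne
    have h1 : 1 ≤ (B₁ ∩ B₂).card :=
      Finset.card_pos.2 (hint B₁ (hC'sub h₁) B₂ (hC'sub h₂) hne)
    have h2 := D_inter B₁ (hC'D h₁) B₂ (hC'D h₂) hne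
    omega
  set d : Pt → ℕ := fun p => (C'.filter (fun B => p ∈ B)).card with hd
  have hdsum : ∀ p : Pt, d p = ∑ B ∈ C', if p ∈ B then 1 else 0 := fun p =>
    Finset.card_filter _ _
  have S1 : ∑ p : Pt, d p = 84 := by
    calc ∑ p : Pt, d p = ∑ p : Pt, ∑ B ∈ C', if p ∈ B then 1 else 0 :=
          Finset.sum_congr rfl fun p _ => hdsum p
      _ = ∑ B ∈ C', ∑ p : Pt, if p ∈ B then 1 else 0 := Finset.sum_comm
      _ = ∑ B ∈ C', B.card := by
          refine Finset.sum_congr rfl fun B _ => ?_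
          rw [Finset.sum_ite_mem, Finset.univ_inter, Finset.sum_const, smul_eq_mul, mul_one]
      _ = ∑ _B ∈ C', 6 := Finset.sum_congr rfl fun B hB => D_card6 B (hC'D hB)
      _ = 84 := by rw [Finset.sum_const, hC'card]; norm_num
  have S2 : ∑ p : Pt, d p ^ 2 = 266 := by
    have h2 : ∀ B₁ B₂ : Finset Pt,
        (∑ p : Pt, (if p ∈ B₁ then 1 else 0) * (if p ∈ B₂ then 1 else 0)) = (B₁ ∩ B₂).card := by
      intro B₁ B₂
      have e : ∀ p : Pt, (if p ∈ B₁ then (1:ℕ) else 0) * (if p ∈ B₂ then 1 else 0)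
          = if p ∈ B₁ ∩ B₂ then 1 else 0 := by
        intro p; by_cases h₁ : p ∈ B₁ <;> by_cases h₂ : p ∈ B₂ <;>
          simp [h₁, h₂, Finset.mem_inter]
      rw [Finset.sum_congr rfl fun p _ => e p, Finset.sum_ite_mem, Finset.univ_inter,
        Finset.sum_const, smul_eq_mul, mul_one]
    calc ∑ p : Pt, d p ^ 2
        = ∑ p : Pt, ∑ B₁ ∈ C', ∑ B₂ ∈ C',
            (if p ∈ B₁ then 1 else 0) * (if p ∈ B₂ then 1 else 0) :=
          Finset.sum_congr rfl fun p _ => by rw [sq, hdsum p, Finset.sum_mul_sum]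
      _ = ∑ B₁ ∈ C', ∑ p : Pt, ∑ B₂ ∈ C',
            (if p ∈ B₁ then 1 else 0) * (if p ∈ B₂ then 1 else 0) := Finset.sum_comm
      _ = ∑ B₁ ∈ C', ∑ B₂ ∈ C', ∑ p : Pt,
            (if p ∈ B₁ then 1 else 0) * (if p ∈ B₂ then 1 else 0) :=
          Finset.sum_congr rfl fun _ _ => Finset.sum_comm
      _ = ∑ B₁ ∈ C', ∑ B₂ ∈ C', (B₁ ∩ B₂).card :=
          Finset.sum_congr rfl fun B₁ _ => Finset.sum_congr rfl fun B₂ _ => h2 B₁ B₂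
      _ = 266 := by
          have hrow : ∀ B₁ ∈ C', ∑ B₂ ∈ C', (B₁ ∩ B₂).card = 19 := by
            intro B₁ h₁
            rw [← Finset.add_sum_erase _ _ h₁, Finset.inter_self, D_card6 B₁ (hC'D h₁)]
            have hoff : ∀ B₂ ∈ C'.erase B₁, (B₁ ∩ B₂).card = 1 := fun B₂ h₂ =>
              hint' B₁ h₁ B₂ (Finset.mem_of_mem_erase h₂) (Ne.symm (Finset.ne_of_mem_erase h₂))
            rw [Finset.sum_congr rfl hoff, Finset.sum_const, Finset.card_erase_of_mem h₁,
              hC'card]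
            norm_num
          rw [Finset.sum_congr rfl hrow, Finset.sum_const, hC'card]; norm_num
  have S3 : ∀ B' ∈ C', ∑ p ∈ B', d p = 19 := by
    intro B' hB'
    calc ∑ p ∈ B', d p = ∑ p ∈ B', ∑ B ∈ C', if p ∈ B then 1 else 0 :=
          Finset.sum_congr rfl fun p _ => hdsum p
      _ = ∑ B ∈ C', ∑ p ∈ B', if p ∈ B then 1 else 0 := Finset.sum_comm
      _ = ∑ B ∈ C', (B' ∩ B).card := by
          refine Finset.sum_congr rfl fun B _ => ?_
          rw [Finset.sum_ite_mem, Finset.sum_const, smul_eq_mul, mul_one]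
      _ = 19 := by
          rw [← Finset.add_sum_erase _ _ hB', Finset.inter_self, D_card6 B' (hC'D hB')]
          have hoff : ∀ B ∈ C'.erase B', (B' ∩ B).card = 1 := fun B h₂ =>
            hint' B' hB' B (Finset.mem_of_mem_erase h₂) (Ne.symm (Finset.ne_of_mem_erase h₂))
          rw [Finset.sum_congr rfl hoff, Finset.sum_const, Finset.card_erase_of_mem hB',
            hC'card]
          norm_num
  have S4 : ∑ B' ∈ designBlocks, ∑ p ∈ B', d p = 1092 := by
    calc ∑ B' ∈ designBlocks, ∑ p ∈ B', d p
        = ∑ B' ∈ designBlocks, ∑ p : Pt, if p ∈ B' then d p else 0 := by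
          refine Finset.sum_congr rfl fun B' _ => ?_
          rw [Finset.sum_ite_mem, Finset.univ_inter]
      _ = ∑ p : Pt, ∑ B' ∈ designBlocks, if p ∈ B' then d p else 0 := Finset.sum_comm
      _ = ∑ p : Pt, 13 * d p := by
          refine Finset.sum_congr rfl fun p _ => ?_
          rw [Finset.sum_ite, Finset.sum_const, Finset.sum_const_zero, add_zero, smul_eq_mul,
            D_r p]
      _ = 1092 := by rw [← Finset.mul_sum, S1]; norm_num
  have key5 : ∀ B' ∈ designBlocks, (∑ p ∈ B', d p) ^ 2
      = ∑ p : Pt, ∑ q : Pt, if p ∈ B' ∧ q ∈ B' then d p * d q else 0 := by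
    intro B' _
    have e : ∀ p : Pt, (∑ q : Pt, if p ∈ B' ∧ q ∈ B' then d p * d q else 0)
        = if p ∈ B' then ∑ q ∈ B', d p * d q else 0 := by
      intro p
      by_cases hp : p ∈ B'
      · simp only [hp, true_and, if_true]
        rw [Finset.sum_ite_mem, Finset.univ_inter]
      · simp [hp]
    have h : (∑ p : Pt, ∑ q : Pt, if p ∈ B' ∧ q ∈ B' then d p * d q else 0)
        = ∑ p ∈ B', ∑ q ∈ B', d p * d q := by
      calc (∑ p : Pt, ∑ q : Pt, if p ∈ B' ∧ q ∈ B' then d p * d q else 0)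
          = ∑ p : Pt, if p ∈ B' then ∑ q ∈ B', d p * d q else 0 :=
            Finset.sum_congr rfl fun p _ => e p
        _ = ∑ p ∈ B', ∑ q ∈ B', d p * d q := by
            rw [Finset.sum_ite_mem, Finset.univ_inter]
    rw [sq, Finset.sum_mul_sum, h]
  have S5a : ∑ B' ∈ designBlocks, (∑ p ∈ B', d p) ^ 2
      = ∑ p : Pt, ∑ q : Pt,
          (designBlocks.filter fun B => p ∈ B ∧ q ∈ B).card * (d p * d q) := by
    calc ∑ B' ∈ designBlocks, (∑ p ∈ B', d p) ^ 2
        = ∑ B' ∈ designBlocks, ∑ p : Pt, ∑ q : Pt,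
            if p ∈ B' ∧ q ∈ B' then d p * d q else 0 := Finset.sum_congr rfl key5
      _ = ∑ p : Pt, ∑ B' ∈ designBlocks, ∑ q : Pt,
            if p ∈ B' ∧ q ∈ B' then d p * d q else 0 := Finset.sum_comm
      _ = ∑ p : Pt, ∑ q : Pt, ∑ B' ∈ designBlocks,
            if p ∈ B' ∧ q ∈ B' then d p * d q else 0 :=
          Finset.sum_congr rfl fun _ _ => Finset.sum_comm
      _ = ∑ p : Pt, ∑ q : Pt,
            (designBlocks.filter fun B => p ∈ B ∧ q ∈ B).card * (d p * d q) :=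
          Finset.sum_congr rfl fun p _ => Finset.sum_congr rfl fun q _ => by
            rw [Finset.sum_ite, Finset.sum_const, Finset.sum_const_zero, add_zero, smul_eq_mul]
  have wdiag : ∀ p : Pt, (designBlocks.filter fun B => p ∈ B ∧ p ∈ B).card = 13 := by
    intro p
    simp only [and_self]
    exact D_r p
  have S5 : ∑ B' ∈ designBlocks, (∑ p ∈ B', d p) ^ 2 ≤ 10248 := by
    rw [S5a]
    have hrow : ∀ p : Pt,
        (∑ q : Pt, (designBlocks.filter fun B => p ∈ B ∧ q ∈ B).card * (d p * d q))
          ≤ 12 * d p ^ 2 + 84 * d p := by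
      intro p
      rw [← Finset.add_sum_erase _ _ (Finset.mem_univ p)]
      have h1 : (designBlocks.filter fun B => p ∈ B ∧ p ∈ B).card * (d p * d p)
          = 13 * d p ^ 2 := by rw [wdiag p, sq]
      have h2 : ∑ q ∈ Finset.univ.erase p,
            (designBlocks.filter fun B => p ∈ B ∧ q ∈ B).card * (d p * d q)
          ≤ ∑ q ∈ Finset.univ.erase p, d p * d q := by
        refine Finset.sum_le_sum fun q hq => ?_
        have hb := D_two p q (Finset.ne_of_mem_erase hq).symm
        calc (designBlocks.filter fun B => p ∈ B ∧ q ∈ B).card * (d p * d q)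
            ≤ 1 * (d p * d q) := Nat.mul_le_mul_right _ hb
          _ = d p * d q := one_mul _
      have h3 : 13 * d p ^ 2 = 12 * d p ^ 2 + d p * d p := by rw [sq]; ring
      calc (designBlocks.filter fun B => p ∈ B ∧ p ∈ B).card * (d p * d p)
            + ∑ q ∈ Finset.univ.erase p,
                (designBlocks.filter fun B => p ∈ B ∧ q ∈ B).card * (d p * d q)
          ≤ 13 * d p ^ 2 + ∑ q ∈ Finset.univ.erase p, d p * d q := by
            rw [h1]; exact Nat.add_le_add_left h2 _
        _ = 12 * d p ^ 2 + (d p * d p + ∑ q ∈ Finset.univ.erase p, d p * d q) := by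
            rw [h3, add_assoc]
        _ = 12 * d p ^ 2 + ∑ q : Pt, d p * d q := by
            rw [Finset.add_sum_erase Finset.univ (fun q => d p * d q) (Finset.mem_univ p)]
        _ = 12 * d p ^ 2 + 84 * d p := by
            rw [← Finset.mul_sum, S1, mul_comm (d p) 84]
    calc ∑ p : Pt, ∑ q : Pt,
          (designBlocks.filter fun B => p ∈ B ∧ q ∈ B).card * (d p * d q)
        ≤ ∑ p : Pt, (12 * d p ^ 2 + 84 * d p) := Finset.sum_le_sum fun p _ => hrow p
      _ = 12 * 266 + 84 * 84 := by
          rw [Finset.sum_add_distrib, ← Finset.mul_sum, ← Finset.mul_sum, S2, S1]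
      _ ≤ 10248 := by norm_num
  have split : (∑ B' ∈ designBlocks \ C', ∑ p ∈ B', d p) + ∑ B' ∈ C', ∑ p ∈ B', d p
      = ∑ B' ∈ designBlocks, ∑ p ∈ B', d p := Finset.sum_sdiff hC'D
  have hCg : ∑ B' ∈ C', ∑ p ∈ B', d p = 266 := by
    rw [Finset.sum_congr rfl S3, Finset.sum_const, hC'card]; norm_num
  have hEg : ∑ B' ∈ designBlocks \ C', ∑ p ∈ B', d p = 826 := by omega
  have split2 : (∑ B' ∈ designBlocks \ C', (∑ p ∈ B', d p) ^ 2) + ∑ B' ∈ C', (∑ p ∈ B', d p) ^ 2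
      = ∑ B' ∈ designBlocks, (∑ p ∈ B', d p) ^ 2 := Finset.sum_sdiff hC'D
  have hCg2 : ∑ B' ∈ C', (∑ p ∈ B', d p) ^ 2 = 5054 := by
    rw [Finset.sum_congr rfl fun B' h => by rw [S3 B' h], Finset.sum_const, hC'card]; norm_num
  have hEg2 : ∑ B' ∈ designBlocks \ C', (∑ p ∈ B', d p) ^ 2 ≤ 5194 := by omega
  have hcard : (designBlocks \ C').card ≤ 129 := by
    rw [Finset.card_sdiff_of_subset hC'D, hC'card]
    have := D_card
    omega
  have CS : (∑ B' ∈ designBlocks \ C', ∑ p ∈ B', d p) ^ 2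
      ≤ (designBlocks \ C').card * ∑ B' ∈ designBlocks \ C', (∑ p ∈ B', d p) ^ 2 := by
    have h := sq_sum_le_card_mul_sum_sq (s := designBlocks \ C') (f := fun B' => ((∑ p ∈ B', d p : ℕ) : ℚ))
    push_cast at h
    exact_mod_cast h
  rw [hEg] at CS
  have hfin : (826 : ℕ) ^ 2 ≤ 129 * 5194 := le_trans CS (Nat.mul_le_mul hcard hEg2)
  norm_num at hfin
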